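/- Every sequent provable in cut-free GS4 is provable in cut-free lTS4. -/

import Mathlib

inductive Fml : Type
  | var : ℕ → Fml
  | and : Fml → Fml → Fml
  | or  : Fml → Fml → Fml
  | imp : Fml → Fml → Fml
  | neg : Fml → Fml
  | box : Fml → Fml
  | dia : Fml → Fml
  deriving DecidableEq

open Fml

abbrev Ctx := Finset Fml

/-- □Γ -/
def boxS (Γ : Ctx) : Ctx := Γ.image Fml.box
/-- ◇Γ -/
def diaS (Γ : Ctx) : Ctx := Γ.image Fml.dia
/-- ¬□Γ -/
def nboxS (Γ : Ctx) : Ctx := Γ.image (fun g => Fml.neg (Fml.box g))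
/-- ¬◇Γ -/
def ndiaS (Γ : Ctx) : Ctx := Γ.image (fun g => Fml.neg (Fml.dia g))

/-- The twist sequent calculus lTS4; the Boolean index is `true` iff the cut rule is allowed.
    `lTS4 false` is the cut-free fragment. -/
inductive lTS4 : Bool → Ctx → Ctx → Prop
  | initV (c : Bool) (p : ℕ) : lTS4 c {var p} {var p}
  | initNV (c : Bool) (p : ℕ) : lTS4 c {neg (var p)} {neg (var p)}
  | initL (c : Bool) (p : ℕ) : lTS4 c {neg (var p), var p} ∅
  | initR (c : Bool) (p : ℕ) : lTS4 c ∅ {neg (var p), var p}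
  | cut (Γ Δ : Ctx) (α : Fml) :
      lTS4 true Γ {α} → lTS4 true (insert α Γ) Δ → lTS4 true Γ Δ
  | weL (c Γ Δ α) : lTS4 c Γ Δ → lTS4 c (insert α Γ) Δ
  | weR (c Γ Δ α) : lTS4 c Γ Δ → lTS4 c Γ (insert α Δ)
  | andL (c Γ Δ α β) : lTS4 c (insert α (insert β Γ)) Δ → lTS4 c (insert (α.and β) Γ) Δ
  | andR (c Γ Δ α β) : lTS4 c Γ (insert α Δ) → lTS4 c Γ (insert β Δ) →
      lTS4 c Γ (insert (α.and β) Δ)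
  | orL (c Γ Δ α β) : lTS4 c (insert α Γ) Δ → lTS4 c (insert β Γ) Δ →
      lTS4 c (insert (α.or β) Γ) Δ
  | orR (c Γ Δ α β) : lTS4 c Γ (insert α (insert β Δ)) → lTS4 c Γ (insert (α.or β) Δ)
  | impL (c Γ Δ α β) : lTS4 c Γ (insert α Δ) → lTS4 c (insert β Γ) Δ →
      lTS4 c (insert (α.imp β) Γ) Δ
  | impR (c Γ Δ α β) : lTS4 c (insert α Γ) (insert β Δ) → lTS4 c Γ (insert (α.imp β) Δ)
  | boxL (c Γ Δ α) : lTS4 c (insert α Γ) Δ → lTS4 c (insert α.box Γ) Δ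
  | boxR (c Γ₁ Γ₂ Δ₁ Δ₂ α) :
      lTS4 c (boxS Γ₁ ∪ ndiaS Γ₂) (insert α (diaS Δ₁ ∪ nboxS Δ₂)) →
      lTS4 c (boxS Γ₁ ∪ ndiaS Γ₂) (insert α.box (diaS Δ₁ ∪ nboxS Δ₂))
  | diaL (c Γ₁ Γ₂ Δ₁ Δ₂ α) :
      lTS4 c (insert α (boxS Γ₁ ∪ ndiaS Γ₂)) (diaS Δ₁ ∪ nboxS Δ₂) →
      lTS4 c (insert α.dia (boxS Γ₁ ∪ ndiaS Γ₂)) (diaS Δ₁ ∪ nboxS Δ₂)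
  | diaR (c Γ Δ α) : lTS4 c Γ (insert α Δ) → lTS4 c Γ (insert α.dia Δ)
  | nnL (c Γ Δ α) : lTS4 c (insert α Γ) Δ → lTS4 c (insert α.neg.neg Γ) Δ
  | nnR (c Γ Δ α) : lTS4 c Γ (insert α Δ) → lTS4 c Γ (insert α.neg.neg Δ)
  | nandL (c Γ Δ α β) : lTS4 c Γ (insert α Δ) → lTS4 c Γ (insert β Δ) →
      lTS4 c (insert (α.and β).neg Γ) Δ
  | nandR (c Γ Δ α β) : lTS4 c (insert α (insert β Γ)) Δ → lTS4 c Γ (insert (α.and β).neg Δ)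
  | norL (c Γ Δ α β) : lTS4 c Γ (insert α (insert β Δ)) → lTS4 c (insert (α.or β).neg Γ) Δ
  | norR (c Γ Δ α β) : lTS4 c (insert α Γ) Δ → lTS4 c (insert β Γ) Δ →
      lTS4 c Γ (insert (α.or β).neg Δ)
  | nimpL (c Γ Δ α β) : lTS4 c (insert α Γ) (insert β Δ) → lTS4 c (insert (α.imp β).neg Γ) Δ
  | nimpR (c Γ Δ α β) : lTS4 c Γ (insert α Δ) → lTS4 c (insert β Γ) Δ →
      lTS4 c Γ (insert (α.imp β).neg Δ)
  | nboxL (c Γ₁ Γ₂ Δ₁ Δ₂ α) :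
      lTS4 c (boxS Γ₁ ∪ ndiaS Γ₂) (insert α (diaS Δ₁ ∪ nboxS Δ₂)) →
      lTS4 c (insert α.box.neg (boxS Γ₁ ∪ ndiaS Γ₂)) (diaS Δ₁ ∪ nboxS Δ₂)
  | nboxR (c Γ Δ α) : lTS4 c (insert α Γ) Δ → lTS4 c Γ (insert α.box.neg Δ)
  | ndiaL (c Γ Δ α) : lTS4 c Γ (insert α Δ) → lTS4 c (insert α.dia.neg Γ) Δ
  | ndiaR (c Γ₁ Γ₂ Δ₁ Δ₂ α) :
      lTS4 c (insert α (boxS Γ₁ ∪ ndiaS Γ₂)) (diaS Δ₁ ∪ nboxS Δ₂) →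
      lTS4 c (boxS Γ₁ ∪ ndiaS Γ₂) (insert α.dia.neg (diaS Δ₁ ∪ nboxS Δ₂))

/-- Kripke's sequent calculus GS4; the Boolean index is `true` iff the cut rule is allowed. -/
inductive GS4 : Bool → Ctx → Ctx → Prop
  | initV (c : Bool) (p : ℕ) : GS4 c {var p} {var p}
  | cut (Γ Δ : Ctx) (α : Fml) :
      GS4 true Γ {α} → GS4 true (insert α Γ) Δ → GS4 true Γ Δ
  | weL (c Γ Δ α) : GS4 c Γ Δ → GS4 c (insert α Γ) Δ
  | weR (c Γ Δ α) : GS4 c Γ Δ → GS4 c Γ (insert α Δ)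
  | andL (c Γ Δ α β) : GS4 c (insert α (insert β Γ)) Δ → GS4 c (insert (α.and β) Γ) Δ
  | andR (c Γ Δ α β) : GS4 c Γ (insert α Δ) → GS4 c Γ (insert β Δ) →
      GS4 c Γ (insert (α.and β) Δ)
  | orL (c Γ Δ α β) : GS4 c (insert α Γ) Δ → GS4 c (insert β Γ) Δ →
      GS4 c (insert (α.or β) Γ) Δ
  | orR (c Γ Δ α β) : GS4 c Γ (insert α (insert β Δ)) → GS4 c Γ (insert (α.or β) Δ)
  | impL (c Γ Δ α β) : GS4 c Γ (insert α Δ) → GS4 c (insert β Γ) Δ →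
      GS4 c (insert (α.imp β) Γ) Δ
  | impR (c Γ Δ α β) : GS4 c (insert α Γ) (insert β Δ) → GS4 c Γ (insert (α.imp β) Δ)
  | negL (c Γ Δ α) : GS4 c Γ (insert α Δ) → GS4 c (insert α.neg Γ) Δ
  | negR (c Γ Δ α) : GS4 c (insert α Γ) Δ → GS4 c Γ (insert α.neg Δ)
  | boxL (c Γ Δ α) : GS4 c (insert α Γ) Δ → GS4 c (insert α.box Γ) Δ
  | boxRk (c Γ Δ α) : GS4 c (boxS Γ) (insert α (diaS Δ)) →
      GS4 c (boxS Γ) (insert α.box (diaS Δ))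
  | diaLk (c Γ Δ α) : GS4 c (insert α (boxS Γ)) (diaS Δ) →
      GS4 c (insert α.dia (boxS Γ)) (diaS Δ)
  | diaR (c Γ Δ α) : GS4 c Γ (insert α Δ) → GS4 c Γ (insert α.dia Δ)

/-!
Every rule of GS4 other than (¬left) and (¬right) is a rule of lTS4: the k-restricted modal
rules are the context-generalised ones with empty negated parts. So it suffices that (¬left) and
(¬right) are admissible in cut-free lTS4.

Let `a.complement` be `b` if `a = ¬b` and `¬a` otherwise. By induction on a cut-free derivation,
the formula `a` may be deleted from the succedent if `a.complement` is added to the antecedent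
(and dually). If `a` is principal, the twist rule for `¬a` (or, when `a = ¬b`, the ordinary rule
for `b`) applied to the transformed premises does it; the case `a = ¬¬b` needs the statement for
the smaller formula `b`. In a modal rule the context restriction survives, because the complement
of a `◇`/`¬□` formula is a `□`/`¬◇` formula and vice versa. Finally `¬a` follows from
`a.complement` by at most one (¬¬) step.
-/

open Finset

theorem Finset.insert_subset_insert_insert {α : Type*} [DecidableEq α] {s t : Finset α} {a : α}
    (b : α) (h : s ⊆ insert a t) : insert b s ⊆ insert a (insert b t) :=
  (insert_subset_insert b h).trans (insert_comm b a t).subset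

namespace Fml

def complement : Fml → Fml
  | neg b => b
  | a => neg a

def IsNecessity : Fml → Prop
  | box _ | neg (dia _) => True
  | _ => False

def IsPossibility : Fml → Prop
  | dia _ | neg (box _) => True
  | _ => False

theorem IsPossibility.complement {a : Fml} (h : a.IsPossibility) : a.complement.IsNecessity := by
  rcases a with _ | _ | _ | _ | (_ | _ | _ | _ | _ | _ | _) | _ | _ <;> trivial

theorem IsNecessity.complement {a : Fml} (h : a.IsNecessity) : a.complement.IsPossibility := by
  rcases a with _ | _ | _ | _ | (_ | _ | _ | _ | _ | _ | _) | _ | _ <;> trivial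

end Fml

theorem exists_eq_boxS_union_ndiaS {Γ : Ctx} (h : ∀ φ ∈ Γ, φ.IsNecessity) :
    ∃ Γ₁ Γ₂, Γ = boxS Γ₁ ∪ ndiaS Γ₂ := by
  induction Γ using Finset.induction_on with
  | empty => exact ⟨∅, ∅, rfl⟩
  | insert φ Γ _ ih =>
    obtain ⟨Γ₁, Γ₂, rfl⟩ := ih fun ψ hψ => h ψ (mem_insert_of_mem hψ)
    have hφ := h φ (mem_insert_self _ _)
    rcases φ with _ | _ | _ | _ | (_ | _ | _ | _ | _ | _ | ψ) | ψ | _ <;> try contradiction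
    · exact ⟨Γ₁, insert ψ Γ₂, by simp [boxS, ndiaS, image_insert]⟩
    · exact ⟨insert ψ Γ₁, Γ₂, by simp [boxS, ndiaS, image_insert, insert_union]⟩

theorem exists_eq_diaS_union_nboxS {Δ : Ctx} (h : ∀ φ ∈ Δ, φ.IsPossibility) :
    ∃ Δ₁ Δ₂, Δ = diaS Δ₁ ∪ nboxS Δ₂ := by
  induction Δ using Finset.induction_on with
  | empty => exact ⟨∅, ∅, rfl⟩
  | insert φ Δ _ ih =>
    obtain ⟨Δ₁, Δ₂, rfl⟩ := ih fun ψ hψ => h ψ (mem_insert_of_mem hψ)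
    have hφ := h φ (mem_insert_self _ _)
    rcases φ with _ | _ | _ | _ | (_ | _ | _ | _ | _ | ψ | _) | _ | ψ <;> try contradiction
    · exact ⟨Δ₁, insert ψ Δ₂, by simp [diaS, nboxS, image_insert]⟩
    · exact ⟨insert ψ Δ₁, Δ₂, by simp [diaS, nboxS, image_insert, insert_union]⟩

/-- The sequents `□Γ₁, ¬◇Γ₂ ⊢ ◇Δ₁, ¬□Δ₂` to which the modal rules of lTS4 apply. -/
def IsModalSequent (Γ Δ : Ctx) : Prop :=
  (∀ φ ∈ Γ, φ.IsNecessity) ∧ ∀ φ ∈ Δ, φ.IsPossibility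

namespace IsModalSequent

variable {Γ Δ : Ctx} {a : Fml}

theorem _root_.isModalSequent_boxS_diaS (Γ₁ Γ₂ Δ₁ Δ₂ : Ctx) :
    IsModalSequent (boxS Γ₁ ∪ ndiaS Γ₂) (diaS Δ₁ ∪ nboxS Δ₂) := by
  constructor <;> intro φ hφ <;>
    simp only [boxS, ndiaS, diaS, nboxS, mem_union, mem_image] at hφ <;>
    rcases hφ with ⟨_, _, rfl⟩ | ⟨_, _, rfl⟩ <;> trivial

theorem exists_eq_boxS_diaS (h : IsModalSequent Γ Δ) :
    ∃ Γ₁ Γ₂ Δ₁ Δ₂, Γ = boxS Γ₁ ∪ ndiaS Γ₂ ∧ Δ = diaS Δ₁ ∪ nboxS Δ₂ := by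
  obtain ⟨Γ₁, Γ₂, rfl⟩ := exists_eq_boxS_union_ndiaS h.1
  obtain ⟨Δ₁, Δ₂, rfl⟩ := exists_eq_diaS_union_nboxS h.2
  exact ⟨Γ₁, Γ₂, Δ₁, Δ₂, rfl, rfl⟩

theorem complement_left (h : IsModalSequent Γ Δ) (ha : a ∈ Δ) :
    IsModalSequent (insert a.complement Γ) (Δ.erase a) :=
  ⟨(forall_mem_insert ..).2 ⟨(h.2 a ha).complement, h.1⟩,
    fun φ hφ => h.2 φ (mem_of_mem_erase hφ)⟩

theorem complement_right (h : IsModalSequent Γ Δ) (ha : a ∈ Γ) :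
    IsModalSequent (Γ.erase a) (insert a.complement Δ) :=
  ⟨fun φ hφ => h.1 φ (mem_of_mem_erase hφ),
    (forall_mem_insert ..).2 ⟨(h.1 a ha).complement, h.2⟩⟩

theorem notMem_left {φ : Fml} (h : IsModalSequent Γ Δ) (hφ : ¬φ.IsNecessity) : φ ∉ Γ :=
  fun hmem => hφ (h.1 φ hmem)

theorem notMem_right {φ : Fml} (h : IsModalSequent Γ Δ) (hφ : ¬φ.IsPossibility) : φ ∉ Δ :=
  fun hmem => hφ (h.2 φ hmem)

end IsModalSequent

namespace lTS4

section

variable {c : Bool} {Γ Δ Γ' Δ' : Ctx} {α : Fml}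

theorem union_left (h : lTS4 c Γ Δ) (S : Ctx) : lTS4 c (S ∪ Γ) Δ := by
  induction S using Finset.induction_on with
  | empty => simpa
  | insert φ S _ ih => simpa [insert_union] using weL _ _ _ φ ih

theorem union_right (h : lTS4 c Γ Δ) (S : Ctx) : lTS4 c Γ (S ∪ Δ) := by
  induction S using Finset.induction_on with
  | empty => simpa
  | insert φ S _ ih => simpa [insert_union] using weR _ _ _ φ ih

theorem weaken (h : lTS4 c Γ Δ) (hΓ : Γ ⊆ Γ') (hΔ : Δ ⊆ Δ') : lTS4 c Γ' Δ' := by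
  simpa [union_eq_left.2 hΓ, union_eq_left.2 hΔ] using (h.union_left Γ').union_right Δ'

theorem of_insert_left (h : lTS4 c (insert α Γ) Δ) (hα : α ∈ Γ) : lTS4 c Γ Δ := by
  rwa [insert_eq_of_mem hα] at h

theorem of_insert_right (h : lTS4 c Γ (insert α Δ)) (hα : α ∈ Δ) : lTS4 c Γ Δ := by
  rwa [insert_eq_of_mem hα] at h

theorem boxR_of_subset (hm : IsModalSequent Γ Δ) (h : lTS4 c Γ (insert α Δ)) (hΓ : Γ ⊆ Γ')
    (hΔ : insert α.box Δ ⊆ Δ') : lTS4 c Γ' Δ' := by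
  obtain ⟨Γ₁, Γ₂, Δ₁, Δ₂, rfl, rfl⟩ := hm.exists_eq_boxS_diaS
  exact (boxR c Γ₁ Γ₂ Δ₁ Δ₂ α h).weaken hΓ hΔ

theorem diaL_of_subset (hm : IsModalSequent Γ Δ) (h : lTS4 c (insert α Γ) Δ)
    (hΓ : insert α.dia Γ ⊆ Γ') (hΔ : Δ ⊆ Δ') : lTS4 c Γ' Δ' := by
  obtain ⟨Γ₁, Γ₂, Δ₁, Δ₂, rfl, rfl⟩ := hm.exists_eq_boxS_diaS
  exact (diaL c Γ₁ Γ₂ Δ₁ Δ₂ α h).weaken hΓ hΔ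

theorem nboxL_of_subset (hm : IsModalSequent Γ Δ) (h : lTS4 c Γ (insert α Δ))
    (hΓ : insert α.box.neg Γ ⊆ Γ') (hΔ : Δ ⊆ Δ') : lTS4 c Γ' Δ' := by
  obtain ⟨Γ₁, Γ₂, Δ₁, Δ₂, rfl, rfl⟩ := hm.exists_eq_boxS_diaS
  exact (nboxL c Γ₁ Γ₂ Δ₁ Δ₂ α h).weaken hΓ hΔ

theorem ndiaR_of_subset (hm : IsModalSequent Γ Δ) (h : lTS4 c (insert α Γ) Δ)
    (hΓ : Γ ⊆ Γ') (hΔ : insert α.dia.neg Δ ⊆ Δ') : lTS4 c Γ' Δ' := by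
  obtain ⟨Γ₁, Γ₂, Δ₁, Δ₂, rfl, rfl⟩ := hm.exists_eq_boxS_diaS
  exact (ndiaR c Γ₁ Γ₂ Δ₁ Δ₂ α h).weaken hΓ hΔ

theorem neg_left_of_complement (h : lTS4 c (insert α.complement Γ) Δ) :
    lTS4 c (insert α.neg Γ) Δ := by
  cases α <;> first | exact h | exact nnL _ _ _ _ h

theorem neg_right_of_complement (h : lTS4 c Γ (insert α.complement Δ)) :
    lTS4 c Γ (insert α.neg Δ) := by
  cases α <;> first | exact h | exact nnR _ _ _ _ h

end

theorem complement_left (a : Fml) {Γ Δ Γ' Δ' : Ctx} (h : lTS4 false Γ Δ)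
    (ha : a.complement ∈ Γ') (hΓ : Γ ⊆ Γ') (hΔ : Δ ⊆ insert a Δ') :
    lTS4 false Γ' Δ' := by
  obtain ⟨c, hc, hd⟩ : ∃ c, false = c ∧ lTS4 c Γ Δ := ⟨false, rfl, h⟩
  clear h
  induction hd generalizing Γ' Δ' with
  | cut => cases hc
  | initV _ p =>
    rcases mem_insert.1 (singleton_subset_iff.1 hΔ) with rfl | hp
    · exact (initL false p).weaken (insert_subset ha hΓ) (empty_subset _)
    · exact (initV false p).weaken hΓ (singleton_subset_iff.2 hp)
  | initNV _ p =>
    rcases mem_insert.1 (singleton_subset_iff.1 hΔ) with rfl | hp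
    · exact (initL false p).weaken (insert_subset (singleton_subset_iff.1 hΓ)
        (singleton_subset_iff.2 ha)) (empty_subset _)
    · exact (initNV false p).weaken hΓ (singleton_subset_iff.2 hp)
  | initL _ p => exact (initL false p).weaken hΓ (empty_subset _)
  | initR _ p =>
    obtain ⟨hn, hp⟩ := insert_subset_iff.1 hΔ
    rcases mem_insert.1 hn with rfl | hn'
    · exact (initV false p).weaken (singleton_subset_iff.2 ha)
        ((subset_insert_iff_of_notMem (by simp)).1 hp)
    rcases mem_insert.1 (singleton_subset_iff.1 hp) with rfl | hp'
    · exact (initNV false p).weaken (singleton_subset_iff.2 ha) (singleton_subset_iff.2 hn')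
    · exact (initR false p).weaken (empty_subset _)
        (insert_subset hn' (singleton_subset_iff.2 hp'))
  | weL _ Γ Δ α _ ih => exact ih ha ((subset_insert α Γ).trans hΓ) hΔ hc
  | weR _ Γ Δ α _ ih => exact ih ha hΓ ((subset_insert α Δ).trans hΔ) hc
  | andL _ Γ Δ α β _ ih =>
    obtain ⟨hφ, hΓ⟩ := insert_subset_iff.1 hΓ
    exact (andL _ Γ' Δ' α β (ih (by simp [ha]) (by gcongr) hΔ hc)).of_insert_left hφ
  | andR _ Γ Δ α β _ _ ih₁ ih₂ =>
    obtain ⟨hφ, hΔ⟩ := insert_subset_iff.1 hΔ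
    have h₁ := ih₁ ha hΓ (insert_subset_insert_insert α hΔ) hc
    have h₂ := ih₂ ha hΓ (insert_subset_insert_insert β hΔ) hc
    rcases mem_insert.1 hφ with rfl | hφ
    · exact (nandL _ Γ' Δ' α β h₁ h₂).of_insert_left ha
    · exact (andR _ Γ' Δ' α β h₁ h₂).of_insert_right hφ
  | orL _ Γ Δ α β _ _ ih₁ ih₂ =>
    obtain ⟨hφ, hΓ⟩ := insert_subset_iff.1 hΓ
    exact (orL _ Γ' Δ' α β (ih₁ (by simp [ha]) (by gcongr) hΔ hc)
      (ih₂ (by simp [ha]) (by gcongr) hΔ hc)).of_insert_left hφ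
  | orR _ Γ Δ α β _ ih =>
    obtain ⟨hφ, hΔ⟩ := insert_subset_iff.1 hΔ
    have h₁ := ih ha hΓ (insert_subset_insert_insert α (insert_subset_insert_insert β hΔ)) hc
    rcases mem_insert.1 hφ with rfl | hφ
    · exact (norL _ Γ' Δ' α β h₁).of_insert_left ha
    · exact (orR _ Γ' Δ' α β h₁).of_insert_right hφ
  | impL _ Γ Δ α β _ _ ih₁ ih₂ =>
    obtain ⟨hφ, hΓ⟩ := insert_subset_iff.1 hΓ
    exact (impL _ Γ' Δ' α β (ih₁ ha hΓ (insert_subset_insert_insert α hΔ) hc)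
      (ih₂ (by simp [ha]) (by gcongr) hΔ hc)).of_insert_left hφ
  | impR _ Γ Δ α β _ ih =>
    obtain ⟨hφ, hΔ⟩ := insert_subset_iff.1 hΔ
    have h₁ := ih (Γ' := insert α Γ') (by simp [ha]) (by gcongr)
      (insert_subset_insert_insert β hΔ) hc
    rcases mem_insert.1 hφ with rfl | hφ
    · exact (nimpL _ Γ' Δ' α β h₁).of_insert_left ha
    · exact (impR _ Γ' Δ' α β h₁).of_insert_right hφ
  | boxL _ Γ Δ α _ ih =>
    obtain ⟨hφ, hΓ⟩ := insert_subset_iff.1 hΓ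
    exact (boxL _ Γ' Δ' α (ih (by simp [ha]) (by gcongr) hΔ hc)).of_insert_left hφ
  | boxR _ Γ₁ Γ₂ Δ₁ Δ₂ α hp ih =>
    have hm := isModalSequent_boxS_diaS Γ₁ Γ₂ Δ₁ Δ₂
    obtain ⟨hφ, hΔ⟩ := insert_subset_iff.1 hΔ
    rcases mem_insert.1 hφ with rfl | hφ
    · exact nboxL_of_subset hm (hc ▸ hp) (insert_subset ha hΓ)
        ((subset_insert_iff_of_notMem (hm.notMem_right id)).1 hΔ)
    by_cases haΔ : a ∈ diaS Δ₁ ∪ nboxS Δ₂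
    · exact boxR_of_subset (hm.complement_left haΔ)
        (ih (mem_insert_self _ _) (subset_insert _ _)
          (insert_subset_insert_insert α (insert_erase_subset _ _)) hc)
        (insert_subset ha hΓ) (insert_subset hφ (subset_insert_iff.1 hΔ))
    · exact boxR_of_subset hm (hc ▸ hp) hΓ
        (insert_subset hφ ((subset_insert_iff_of_notMem haΔ).1 hΔ))
  | nnR _ Γ Δ α _ ih =>
    obtain ⟨hφ, hΔ⟩ := insert_subset_iff.1 hΔ
    have h₁ := ih ha hΓ (insert_subset_insert_insert α hΔ) hc
    rcases mem_insert.1 hφ with rfl | hφ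
    · exact (neg_left_of_complement (complement_left α h₁ (mem_insert_self _ _)
        (subset_insert _ _) subset_rfl)).of_insert_left ha
    · exact (nnR _ Γ' Δ' α h₁).of_insert_right hφ
  | diaL _ Γ₁ Γ₂ Δ₁ Δ₂ α hp ih =>
    have hm := isModalSequent_boxS_diaS Γ₁ Γ₂ Δ₁ Δ₂
    obtain ⟨hφ, hΓ⟩ := insert_subset_iff.1 hΓ
    by_cases haΔ : a ∈ diaS Δ₁ ∪ nboxS Δ₂
    · exact diaL_of_subset (hm.complement_left haΔ)
        (ih (by simp) (insert_subset_insert α (subset_insert _ _)) (insert_erase_subset _ _) hc)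
        (insert_subset hφ (insert_subset ha hΓ)) (subset_insert_iff.1 hΔ)
    · exact diaL_of_subset hm (hc ▸ hp) (insert_subset hφ hΓ)
        ((subset_insert_iff_of_notMem haΔ).1 hΔ)
  | diaR _ Γ Δ α _ ih =>
    obtain ⟨hφ, hΔ⟩ := insert_subset_iff.1 hΔ
    have h₁ := ih ha hΓ (insert_subset_insert_insert α hΔ) hc
    rcases mem_insert.1 hφ with rfl | hφ
    · exact (ndiaL _ Γ' Δ' α h₁).of_insert_left ha
    · exact (diaR _ Γ' Δ' α h₁).of_insert_right hφ
  | nnL _ Γ Δ α _ ih =>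
    obtain ⟨hφ, hΓ⟩ := insert_subset_iff.1 hΓ
    exact (nnL _ Γ' Δ' α (ih (by simp [ha]) (by gcongr) hΔ hc)).of_insert_left hφ
  | nandL _ Γ Δ α β _ _ ih₁ ih₂ =>
    obtain ⟨hφ, hΓ⟩ := insert_subset_iff.1 hΓ
    exact (nandL _ Γ' Δ' α β (ih₁ ha hΓ (insert_subset_insert_insert α hΔ) hc)
      (ih₂ ha hΓ (insert_subset_insert_insert β hΔ) hc)).of_insert_left hφ
  | nandR _ Γ Δ α β _ ih =>
    obtain ⟨hφ, hΔ⟩ := insert_subset_iff.1 hΔ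
    have h₁ := ih (Γ' := insert α (insert β Γ')) (by simp [ha]) (by gcongr) hΔ hc
    rcases mem_insert.1 hφ with rfl | hφ
    · exact (andL _ Γ' Δ' α β h₁).of_insert_left ha
    · exact (nandR _ Γ' Δ' α β h₁).of_insert_right hφ
  | norL _ Γ Δ α β _ ih =>
    obtain ⟨hφ, hΓ⟩ := insert_subset_iff.1 hΓ
    exact (norL _ Γ' Δ' α β (ih ha hΓ
      (insert_subset_insert_insert α (insert_subset_insert_insert β hΔ)) hc)).of_insert_left hφ
  | norR _ Γ Δ α β _ _ ih₁ ih₂ =>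
    obtain ⟨hφ, hΔ⟩ := insert_subset_iff.1 hΔ
    have h₁ := ih₁ (Γ' := insert α Γ') (by simp [ha]) (by gcongr) hΔ hc
    have h₂ := ih₂ (Γ' := insert β Γ') (by simp [ha]) (by gcongr) hΔ hc
    rcases mem_insert.1 hφ with rfl | hφ
    · exact (orL _ Γ' Δ' α β h₁ h₂).of_insert_left ha
    · exact (norR _ Γ' Δ' α β h₁ h₂).of_insert_right hφ
  | nimpL _ Γ Δ α β _ ih =>
    obtain ⟨hφ, hΓ⟩ := insert_subset_iff.1 hΓ
    exact (nimpL _ Γ' Δ' α β (ih (by simp [ha]) (by gcongr)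
      (insert_subset_insert_insert β hΔ) hc)).of_insert_left hφ
  | nimpR _ Γ Δ α β _ _ ih₁ ih₂ =>
    obtain ⟨hφ, hΔ⟩ := insert_subset_iff.1 hΔ
    have h₁ := ih₁ ha hΓ (insert_subset_insert_insert α hΔ) hc
    have h₂ := ih₂ (Γ' := insert β Γ') (by simp [ha]) (by gcongr) hΔ hc
    rcases mem_insert.1 hφ with rfl | hφ
    · exact (impL _ Γ' Δ' α β h₁ h₂).of_insert_left ha
    · exact (nimpR _ Γ' Δ' α β h₁ h₂).of_insert_right hφ
  | nboxL _ Γ₁ Γ₂ Δ₁ Δ₂ α hp ih =>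
    have hm := isModalSequent_boxS_diaS Γ₁ Γ₂ Δ₁ Δ₂
    obtain ⟨hφ, hΓ⟩ := insert_subset_iff.1 hΓ
    by_cases haΔ : a ∈ diaS Δ₁ ∪ nboxS Δ₂
    · exact nboxL_of_subset (hm.complement_left haΔ) (ih (mem_insert_self _ _) (subset_insert _ _)
          (insert_subset_insert_insert α (insert_erase_subset _ _)) hc)
        (insert_subset hφ (insert_subset ha hΓ)) (subset_insert_iff.1 hΔ)
    · exact nboxL_of_subset hm (hc ▸ hp) (insert_subset hφ hΓ)
        ((subset_insert_iff_of_notMem haΔ).1 hΔ)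
  | nboxR _ Γ Δ α _ ih =>
    obtain ⟨hφ, hΔ⟩ := insert_subset_iff.1 hΔ
    have h₁ := ih (Γ' := insert α Γ') (by simp [ha]) (by gcongr) hΔ hc
    rcases mem_insert.1 hφ with rfl | hφ
    · exact (boxL _ Γ' Δ' α h₁).of_insert_left ha
    · exact (nboxR _ Γ' Δ' α h₁).of_insert_right hφ
  | ndiaL _ Γ Δ α _ ih =>
    obtain ⟨hφ, hΓ⟩ := insert_subset_iff.1 hΓ
    exact (ndiaL _ Γ' Δ' α (ih ha hΓ (insert_subset_insert_insert α hΔ) hc)).of_insert_left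
      hφ
  | ndiaR _ Γ₁ Γ₂ Δ₁ Δ₂ α hp ih =>
    have hm := isModalSequent_boxS_diaS Γ₁ Γ₂ Δ₁ Δ₂
    obtain ⟨hφ, hΔ⟩ := insert_subset_iff.1 hΔ
    rcases mem_insert.1 hφ with rfl | hφ
    · exact diaL_of_subset hm (hc ▸ hp) (insert_subset ha hΓ)
        ((subset_insert_iff_of_notMem (hm.notMem_right id)).1 hΔ)
    by_cases haΔ : a ∈ diaS Δ₁ ∪ nboxS Δ₂
    · exact ndiaR_of_subset (hm.complement_left haΔ)
        (ih (by simp) (insert_subset_insert α (subset_insert _ _)) (insert_erase_subset _ _) hc)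
        (insert_subset ha hΓ) (insert_subset hφ (subset_insert_iff.1 hΔ))
    · exact ndiaR_of_subset hm (hc ▸ hp) hΓ
        (insert_subset hφ ((subset_insert_iff_of_notMem haΔ).1 hΔ))
termination_by sizeOf a

theorem complement_right (a : Fml) {Γ Δ Γ' Δ' : Ctx} (h : lTS4 false Γ Δ)
    (ha : a.complement ∈ Δ') (hΓ : Γ ⊆ insert a Γ') (hΔ : Δ ⊆ Δ') :
    lTS4 false Γ' Δ' := by
  obtain ⟨c, hc, hd⟩ : ∃ c, false = c ∧ lTS4 c Γ Δ := ⟨false, rfl, h⟩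
  clear h
  induction hd generalizing Γ' Δ' with
  | cut => cases hc
  | initV _ p =>
    rcases mem_insert.1 (singleton_subset_iff.1 hΓ) with rfl | hp
    · exact (initR false p).weaken (empty_subset _) (insert_subset ha hΔ)
    · exact (initV false p).weaken (singleton_subset_iff.2 hp) hΔ
  | initNV _ p =>
    rcases mem_insert.1 (singleton_subset_iff.1 hΓ) with rfl | hp
    · exact (initR false p).weaken (empty_subset _) (insert_subset (singleton_subset_iff.1 hΔ)
        (singleton_subset_iff.2 ha))
    · exact (initNV false p).weaken (singleton_subset_iff.2 hp) hΔ
  | initL _ p =>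
    obtain ⟨hn, hp⟩ := insert_subset_iff.1 hΓ
    rcases mem_insert.1 hn with rfl | hn'
    · exact (initV false p).weaken ((subset_insert_iff_of_notMem (by simp)).1 hp)
        (singleton_subset_iff.2 ha)
    rcases mem_insert.1 (singleton_subset_iff.1 hp) with rfl | hp'
    · exact (initNV false p).weaken (singleton_subset_iff.2 hn') (singleton_subset_iff.2 ha)
    · exact (initL false p).weaken (insert_subset hn' (singleton_subset_iff.2 hp'))
        (empty_subset _)
  | initR _ p => exact (initR false p).weaken (empty_subset _) hΔ
  | weL _ Γ Δ α _ ih => exact ih ha ((subset_insert α Γ).trans hΓ) hΔ hc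
  | weR _ Γ Δ α _ ih => exact ih ha hΓ ((subset_insert α Δ).trans hΔ) hc
  | andL _ Γ Δ α β _ ih =>
    obtain ⟨hφ, hΓ⟩ := insert_subset_iff.1 hΓ
    have h₁ := ih ha (insert_subset_insert_insert α (insert_subset_insert_insert β hΓ)) hΔ hc
    rcases mem_insert.1 hφ with rfl | hφ
    · exact (nandR _ Γ' Δ' α β h₁).of_insert_right ha
    · exact (andL _ Γ' Δ' α β h₁).of_insert_left hφ
  | andR _ Γ Δ α β _ _ ih₁ ih₂ =>
    obtain ⟨hφ, hΔ⟩ := insert_subset_iff.1 hΔ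
    exact (andR _ Γ' Δ' α β (ih₁ (by simp [ha]) hΓ (by gcongr) hc)
      (ih₂ (by simp [ha]) hΓ (by gcongr) hc)).of_insert_right hφ
  | orL _ Γ Δ α β _ _ ih₁ ih₂ =>
    obtain ⟨hφ, hΓ⟩ := insert_subset_iff.1 hΓ
    have h₁ := ih₁ ha (insert_subset_insert_insert α hΓ) hΔ hc
    have h₂ := ih₂ ha (insert_subset_insert_insert β hΓ) hΔ hc
    rcases mem_insert.1 hφ with rfl | hφ
    · exact (norR _ Γ' Δ' α β h₁ h₂).of_insert_right ha
    · exact (orL _ Γ' Δ' α β h₁ h₂).of_insert_left hφ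
  | orR _ Γ Δ α β _ ih =>
    obtain ⟨hφ, hΔ⟩ := insert_subset_iff.1 hΔ
    exact (orR _ Γ' Δ' α β (ih (by simp [ha]) hΓ (by gcongr) hc)).of_insert_right hφ
  | impL _ Γ Δ α β _ _ ih₁ ih₂ =>
    obtain ⟨hφ, hΓ⟩ := insert_subset_iff.1 hΓ
    have h₁ := ih₁ (Δ' := insert α Δ') (by simp [ha]) hΓ (by gcongr) hc
    have h₂ := ih₂ ha (insert_subset_insert_insert β hΓ) hΔ hc
    rcases mem_insert.1 hφ with rfl | hφ
    · exact (nimpR _ Γ' Δ' α β h₁ h₂).of_insert_right ha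
    · exact (impL _ Γ' Δ' α β h₁ h₂).of_insert_left hφ
  | impR _ Γ Δ α β _ ih =>
    obtain ⟨hφ, hΔ⟩ := insert_subset_iff.1 hΔ
    exact (impR _ Γ' Δ' α β (ih (by simp [ha]) (insert_subset_insert_insert α hΓ) (by gcongr)
      hc)).of_insert_right hφ
  | boxL _ Γ Δ α _ ih =>
    obtain ⟨hφ, hΓ⟩ := insert_subset_iff.1 hΓ
    have h₁ := ih ha (insert_subset_insert_insert α hΓ) hΔ hc
    rcases mem_insert.1 hφ with rfl | hφ
    · exact (nboxR _ Γ' Δ' α h₁).of_insert_right ha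
    · exact (boxL _ Γ' Δ' α h₁).of_insert_left hφ
  | boxR _ Γ₁ Γ₂ Δ₁ Δ₂ α hp ih =>
    have hm := isModalSequent_boxS_diaS Γ₁ Γ₂ Δ₁ Δ₂
    obtain ⟨hφ, hΔ⟩ := insert_subset_iff.1 hΔ
    by_cases haΓ : a ∈ boxS Γ₁ ∪ ndiaS Γ₂
    · exact boxR_of_subset (hm.complement_right haΓ)
        (ih (by simp) (insert_erase_subset _ _) (insert_subset_insert α (subset_insert _ _)) hc)
        (subset_insert_iff.1 hΓ) (insert_subset hφ (insert_subset ha hΔ))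
    · exact boxR_of_subset hm (hc ▸ hp) ((subset_insert_iff_of_notMem haΓ).1 hΓ)
        (insert_subset hφ hΔ)
  | diaL _ Γ₁ Γ₂ Δ₁ Δ₂ α hp ih =>
    have hm := isModalSequent_boxS_diaS Γ₁ Γ₂ Δ₁ Δ₂
    obtain ⟨hφ, hΓ⟩ := insert_subset_iff.1 hΓ
    rcases mem_insert.1 hφ with rfl | hφ
    · exact ndiaR_of_subset hm (hc ▸ hp)
        ((subset_insert_iff_of_notMem (hm.notMem_left id)).1 hΓ) (insert_subset ha hΔ)
    by_cases haΓ : a ∈ boxS Γ₁ ∪ ndiaS Γ₂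
    · exact diaL_of_subset (hm.complement_right haΓ) (ih (mem_insert_self _ _)
          (insert_subset_insert_insert α (insert_erase_subset _ _)) (subset_insert _ _) hc)
        (insert_subset hφ (subset_insert_iff.1 hΓ)) (insert_subset ha hΔ)
    · exact diaL_of_subset hm (hc ▸ hp)
        (insert_subset hφ ((subset_insert_iff_of_notMem haΓ).1 hΓ)) hΔ
  | diaR _ Γ Δ α _ ih =>
    obtain ⟨hφ, hΔ⟩ := insert_subset_iff.1 hΔ
    exact (diaR _ Γ' Δ' α (ih (by simp [ha]) hΓ (by gcongr) hc)).of_insert_right hφ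
  | nnL _ Γ Δ α _ ih =>
    obtain ⟨hφ, hΓ⟩ := insert_subset_iff.1 hΓ
    have h₁ := ih ha (insert_subset_insert_insert α hΓ) hΔ hc
    rcases mem_insert.1 hφ with rfl | hφ
    · exact (neg_right_of_complement (complement_right α h₁ (mem_insert_self _ _)
        subset_rfl (subset_insert _ _))).of_insert_right ha
    · exact (nnL _ Γ' Δ' α h₁).of_insert_left hφ
  | nnR _ Γ Δ α _ ih =>
    obtain ⟨hφ, hΔ⟩ := insert_subset_iff.1 hΔ
    exact (nnR _ Γ' Δ' α (ih (by simp [ha]) hΓ (by gcongr) hc)).of_insert_right hφ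
  | nandL _ Γ Δ α β _ _ ih₁ ih₂ =>
    obtain ⟨hφ, hΓ⟩ := insert_subset_iff.1 hΓ
    have h₁ := ih₁ (Δ' := insert α Δ') (by simp [ha]) hΓ (by gcongr) hc
    have h₂ := ih₂ (Δ' := insert β Δ') (by simp [ha]) hΓ (by gcongr) hc
    rcases mem_insert.1 hφ with rfl | hφ
    · exact (andR _ Γ' Δ' α β h₁ h₂).of_insert_right ha
    · exact (nandL _ Γ' Δ' α β h₁ h₂).of_insert_left hφ
  | nandR _ Γ Δ α β _ ih =>
    obtain ⟨hφ, hΔ⟩ := insert_subset_iff.1 hΔ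
    exact (nandR _ Γ' Δ' α β (ih ha
      (insert_subset_insert_insert α (insert_subset_insert_insert β hΓ)) hΔ hc)).of_insert_right hφ
  | norL _ Γ Δ α β _ ih =>
    obtain ⟨hφ, hΓ⟩ := insert_subset_iff.1 hΓ
    have h₁ := ih (Δ' := insert α (insert β Δ')) (by simp [ha]) hΓ (by gcongr) hc
    rcases mem_insert.1 hφ with rfl | hφ
    · exact (orR _ Γ' Δ' α β h₁).of_insert_right ha
    · exact (norL _ Γ' Δ' α β h₁).of_insert_left hφ
  | norR _ Γ Δ α β _ _ ih₁ ih₂ =>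
    obtain ⟨hφ, hΔ⟩ := insert_subset_iff.1 hΔ
    exact (norR _ Γ' Δ' α β (ih₁ ha (insert_subset_insert_insert α hΓ) hΔ hc)
      (ih₂ ha (insert_subset_insert_insert β hΓ) hΔ hc)).of_insert_right hφ
  | nimpL _ Γ Δ α β _ ih =>
    obtain ⟨hφ, hΓ⟩ := insert_subset_iff.1 hΓ
    have h₁ := ih (Δ' := insert β Δ') (by simp [ha]) (insert_subset_insert_insert α hΓ)
      (by gcongr) hc
    rcases mem_insert.1 hφ with rfl | hφ
    · exact (impR _ Γ' Δ' α β h₁).of_insert_right ha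
    · exact (nimpL _ Γ' Δ' α β h₁).of_insert_left hφ
  | nimpR _ Γ Δ α β _ _ ih₁ ih₂ =>
    obtain ⟨hφ, hΔ⟩ := insert_subset_iff.1 hΔ
    exact (nimpR _ Γ' Δ' α β (ih₁ (by simp [ha]) hΓ (by gcongr) hc)
      (ih₂ ha (insert_subset_insert_insert β hΓ) hΔ hc)).of_insert_right hφ
  | nboxL _ Γ₁ Γ₂ Δ₁ Δ₂ α hp ih =>
    have hm := isModalSequent_boxS_diaS Γ₁ Γ₂ Δ₁ Δ₂
    obtain ⟨hφ, hΓ⟩ := insert_subset_iff.1 hΓ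
    rcases mem_insert.1 hφ with rfl | hφ
    · exact boxR_of_subset hm (hc ▸ hp) ((subset_insert_iff_of_notMem (hm.notMem_left id)).1 hΓ)
        (insert_subset ha hΔ)
    by_cases haΓ : a ∈ boxS Γ₁ ∪ ndiaS Γ₂
    · exact nboxL_of_subset (hm.complement_right haΓ)
        (ih (by simp) (insert_erase_subset _ _) (insert_subset_insert α (subset_insert _ _)) hc)
        (insert_subset hφ (subset_insert_iff.1 hΓ)) (insert_subset ha hΔ)
    · exact nboxL_of_subset hm (hc ▸ hp)
        (insert_subset hφ ((subset_insert_iff_of_notMem haΓ).1 hΓ)) hΔ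
  | nboxR _ Γ Δ α _ ih =>
    obtain ⟨hφ, hΔ⟩ := insert_subset_iff.1 hΔ
    exact (nboxR _ Γ' Δ' α (ih ha (insert_subset_insert_insert α hΓ) hΔ hc)).of_insert_right
      hφ
  | ndiaL _ Γ Δ α _ ih =>
    obtain ⟨hφ, hΓ⟩ := insert_subset_iff.1 hΓ
    have h₁ := ih (Δ' := insert α Δ') (by simp [ha]) hΓ (by gcongr) hc
    rcases mem_insert.1 hφ with rfl | hφ
    · exact (diaR _ Γ' Δ' α h₁).of_insert_right ha
    · exact (ndiaL _ Γ' Δ' α h₁).of_insert_left hφ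
  | ndiaR _ Γ₁ Γ₂ Δ₁ Δ₂ α hp ih =>
    have hm := isModalSequent_boxS_diaS Γ₁ Γ₂ Δ₁ Δ₂
    obtain ⟨hφ, hΔ⟩ := insert_subset_iff.1 hΔ
    by_cases haΓ : a ∈ boxS Γ₁ ∪ ndiaS Γ₂
    · exact ndiaR_of_subset (hm.complement_right haΓ) (ih (mem_insert_self _ _)
          (insert_subset_insert_insert α (insert_erase_subset _ _)) (subset_insert _ _) hc)
        (subset_insert_iff.1 hΓ) (insert_subset hφ (insert_subset ha hΔ))
    · exact ndiaR_of_subset hm (hc ▸ hp) ((subset_insert_iff_of_notMem haΓ).1 hΓ)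
        (insert_subset hφ hΔ)
termination_by sizeOf a

theorem neg_left {Γ Δ : Ctx} {α : Fml} (h : lTS4 false Γ (insert α Δ)) :
    lTS4 false (insert α.neg Γ) Δ :=
  neg_left_of_complement (complement_left α h (mem_insert_self _ _) (subset_insert _ _) subset_rfl)

theorem neg_right {Γ Δ : Ctx} {α : Fml} (h : lTS4 false (insert α Γ) Δ) :
    lTS4 false Γ (insert α.neg Δ) :=
  neg_right_of_complement
    (complement_right α h (mem_insert_self _ _) subset_rfl (subset_insert _ _))

end lTS4

/-- every sequent provable in cut-free GS4 is provable in cut-free lTS4. -/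
theorem stmt8 (Γ Δ : Ctx) (h : GS4 false Γ Δ) : lTS4 false Γ Δ := by
  obtain ⟨c, hc, hd⟩ : ∃ c, false = c ∧ GS4 c Γ Δ := ⟨false, rfl, h⟩
  clear h
  induction hd with
  | cut => cases hc
  | initV _ p => exact lTS4.initV false p
  | weL _ _ _ α _ ih => exact lTS4.weL _ _ _ α (ih hc)
  | weR _ _ _ α _ ih => exact lTS4.weR _ _ _ α (ih hc)
  | andL _ _ _ α β _ ih => exact lTS4.andL _ _ _ α β (ih hc)
  | andR _ _ _ α β _ _ ih₁ ih₂ => exact lTS4.andR _ _ _ α β (ih₁ hc) (ih₂ hc)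
  | orL _ _ _ α β _ _ ih₁ ih₂ => exact lTS4.orL _ _ _ α β (ih₁ hc) (ih₂ hc)
  | orR _ _ _ α β _ ih => exact lTS4.orR _ _ _ α β (ih hc)
  | impL _ _ _ α β _ _ ih₁ ih₂ => exact lTS4.impL _ _ _ α β (ih₁ hc) (ih₂ hc)
  | impR _ _ _ α β _ ih => exact lTS4.impR _ _ _ α β (ih hc)
  | negL _ _ _ _ _ ih => exact (ih hc).neg_left
  | negR _ _ _ _ _ ih => exact (ih hc).neg_right
  | boxL _ _ _ α _ ih => exact lTS4.boxL _ _ _ α (ih hc)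
  | boxRk _ Γ Δ α _ ih =>
    simpa [ndiaS, nboxS] using
      lTS4.boxR false Γ ∅ Δ ∅ α (by simpa [ndiaS, nboxS] using ih hc)
  | diaLk _ Γ Δ α _ ih =>
    simpa [ndiaS, nboxS] using
      lTS4.diaL false Γ ∅ Δ ∅ α (by simpa [ndiaS, nboxS] using ih hc)
  | diaR _ _ _ α _ ih => exact lTS4.diaR _ _ _ α (ih hc)
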